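/- arXiv:1612.07819 — 5 statements merged into one kernel-verified Lean document; each statement's English description precedes it below -/
import Mathlib

section
/- The sum over odd positive integers d of μ(d)·log(d)/d² equals −(8/π²)·∑_{p odd prime} (log p)/(p² − 1). -/
/-!
Twisting by the completely multiplicative weight `w n = 1_{n odd} / n²` commutes with Dirichlet
convolution. Since `μ · log = -(μ * Λ)`, the left-hand side is `-(∑ w μ) (∑ w Λ)` by absolute
convergence. Twisting `ζ * μ = 1` gives `(∑ w) (∑ w μ) = 1`, and `∑ w = (1 - 1/4) ζ(2) = π²/8`.
Finally `w Λ` lives on odd prime powers, and the geometric series over `p^(k+1)` sums to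
`log p / (p² - 1)`.
-/

open ArithmeticFunction Finset
open scoped ArithmeticFunction.Moebius ArithmeticFunction.zeta

namespace ArithmeticFunction

theorem pmul_mul_distrib {R : Type*} [CommSemiring R] {w : ArithmeticFunction R}
    (hw : ∀ m n, w (m * n) = w m * w n) (f g : ArithmeticFunction R) :
    pmul (f * g) w = pmul f w * pmul g w := by
  ext n
  simp only [pmul_apply, mul_apply, sum_mul]
  refine sum_congr rfl fun p hp ↦ ?_
  rw [← (Nat.mem_divisorsAntidiagonal.mp hp).1, hw]
  ring

theorem hasSum_mul {R : Type*} [NormedRing R] [CompleteSpace R] {f g : ArithmeticFunction R}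
    (hf : Summable (‖f ·‖)) (hg : Summable (‖g ·‖)) :
    HasSum (f * g) ((∑' n, f n) * ∑' n, g n) := by
  have hprod := hf.of_norm.hasSum.mul hg.of_norm.hasSum (summable_mul_of_summable_norm hf hg)
  refine (hprod.tsum_fiberwise fun p : ℕ × ℕ ↦ p.1 * p.2).congr_fun fun n ↦ ?_
  rcases eq_or_ne n 0 with rfl | hn
  · have hzero : ∀ q : (fun p : ℕ × ℕ ↦ p.1 * p.2) ⁻¹' {0}, f q.1.1 * g q.1.2 = 0 := by
      rintro ⟨⟨a, b⟩, hq⟩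
      rcases Nat.mul_eq_zero.mp hq with rfl | rfl <;> simp
    simp [hzero]
  · rw [mul_apply, show (fun p : ℕ × ℕ ↦ p.1 * p.2) ⁻¹' {n} = n.divisorsAntidiagonal by
      ext; simp [hn], tsum_subtype' n.divisorsAntidiagonal fun p ↦ f p.1 * g p.2]

theorem pmul_moebius_log :
    pmul (μ : ArithmeticFunction ℝ) log = -((μ : ArithmeticFunction ℝ) * Λ) := by
  have hzeta : (ζ : ArithmeticFunction ℝ) * pmul (μ : ArithmeticFunction ℝ) log = -Λ := by
    ext n
    rw [coe_zeta_mul_apply]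
    simpa [pmul_apply, log_apply] using sum_moebius_mul_log_eq (n := n)
  calc pmul (μ : ArithmeticFunction ℝ) log
      = (μ : ArithmeticFunction ℝ) * ζ * pmul (μ : ArithmeticFunction ℝ) log := by
        rw [coe_moebius_mul_coe_zeta, one_mul]
    _ = -((μ : ArithmeticFunction ℝ) * Λ) := by rw [mul_assoc, hzeta, mul_neg]

theorem summable_norm_moebius_div_sq :
    Summable fun n : ℕ ↦ ‖(μ : ArithmeticFunction ℝ) n‖ / (n : ℝ) ^ 2 := by
  refine (Real.summable_one_div_nat_pow.mpr one_lt_two).of_nonneg_of_le (fun _ ↦ by positivity)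
    fun n ↦ ?_
  gcongr
  rw [intCoe_apply, Real.norm_eq_abs]
  exact_mod_cast abs_moebius_le_one

theorem summable_norm_vonMangoldt_div_sq :
    Summable fun n : ℕ ↦ ‖Λ n‖ / (n : ℝ) ^ 2 := by
  refine (LSeriesSummable_vonMangoldt (s := 2) (by norm_num)).norm.congr fun n ↦ ?_
  rcases eq_or_ne n 0 with rfl | hn
  · simp
  · rw [LSeries.norm_term_eq, if_neg hn, Complex.norm_real]
    norm_num

end ArithmeticFunction

theorem tsum_eq_tsum_primes_tsum_pow_succ {E : Type*} [NormedAddCommGroup E] [CompleteSpace E]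
    {f : ℕ → E} (hf : Summable f) (hsupp : Function.support f ⊆ {n | IsPrimePow n}) :
    ∑' n, f n = ∑' (p : Nat.Primes) (k : ℕ), f (p ^ (k + 1)) := by
  have hinj : Function.Injective fun q : Nat.Primes × ℕ ↦ (q.1 : ℕ) ^ (q.2 + 1) :=
    Subtype.val_injective.comp Nat.Primes.prodNatEquiv.injective
  have hrange : {n | IsPrimePow n} ⊆ Set.range fun q : Nat.Primes × ℕ ↦ (q.1 : ℕ) ^ (q.2 + 1) :=
    fun n hn ↦ ⟨Nat.Primes.prodNatEquiv.symm ⟨n, hn⟩,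
      congrArg Subtype.val (Nat.Primes.prodNatEquiv.apply_symm_apply ⟨n, hn⟩)⟩
  have hfe := hf.comp_injective hinj
  rw [← hinj.tsum_eq (hsupp.trans hrange)]
  exact hfe.tsum_prod' hfe.prod_factor

noncomputable def oddInvSq : ArithmeticFunction ℝ :=
  ⟨fun n ↦ if Odd n then ((n : ℝ) ^ 2)⁻¹ else 0, by simp⟩

theorem oddInvSq_apply (n : ℕ) : oddInvSq n = if Odd n then ((n : ℝ) ^ 2)⁻¹ else 0 := rfl

theorem oddInvSq_mul (m n : ℕ) : oddInvSq (m * n) = oddInvSq m * oddInvSq n := by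
  simp only [oddInvSq_apply, Nat.odd_mul]
  by_cases hm : Odd m <;> by_cases hn : Odd n <;> simp [hm, hn, mul_pow, mul_comm]

theorem pmul_oddInvSq_one : pmul (1 : ArithmeticFunction ℝ) oddInvSq = 1 := by
  ext n
  rw [pmul_apply, one_apply]
  split_ifs with h <;> simp [h, oddInvSq_apply]

theorem summable_norm_pmul_oddInvSq {f : ArithmeticFunction ℝ}
    (hf : Summable fun n : ℕ ↦ ‖f n‖ / (n : ℝ) ^ 2) :
    Summable fun n ↦ ‖pmul f oddInvSq n‖ := by
  refine hf.of_nonneg_of_le (fun _ ↦ norm_nonneg _) fun n ↦ ?_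
  rw [pmul_apply, oddInvSq_apply]
  split_ifs
  · rw [norm_mul, norm_inv, norm_pow, Real.norm_natCast, div_eq_mul_inv]
  · simp only [mul_zero, norm_zero]
    positivity

theorem hasSum_oddInvSq : HasSum oddInvSq (Real.pi ^ 2 / 8) := by
  have hzeta := hasSum_zeta_two
  have heven : HasSum (fun k : ℕ ↦ 1 / ((2 * k : ℕ) : ℝ) ^ 2) (1 / 4 * (Real.pi ^ 2 / 6)) :=
    (hzeta.mul_left (1 / 4)).congr_fun fun k ↦ by push_cast; ring
  have hinj : Function.Injective fun k : ℕ ↦ 2 * k + 1 := fun a b h ↦ by simp only at h; omega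
  have hodd : HasSum (fun k : ℕ ↦ 1 / ((2 * k + 1 : ℕ) : ℝ) ^ 2)
      (∑' k : ℕ, 1 / ((2 * k + 1 : ℕ) : ℝ) ^ 2) :=
    (hzeta.summable.comp_injective hinj).hasSum
  have hoddSum : ∑' k : ℕ, 1 / ((2 * k + 1 : ℕ) : ℝ) ^ 2 = Real.pi ^ 2 / 8 := by
    have := hzeta.unique (HasSum.even_add_odd (f := fun n : ℕ ↦ 1 / (n : ℝ) ^ 2) heven hodd)
    linarith
  have hw_even : HasSum (fun k ↦ oddInvSq (2 * k)) 0 :=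
    hasSum_zero.congr_fun fun k ↦ by simp [oddInvSq_apply]
  have hw_odd : HasSum (fun k ↦ oddInvSq (2 * k + 1)) (Real.pi ^ 2 / 8) :=
    (hoddSum ▸ hodd).congr_fun fun k ↦ by simp [oddInvSq_apply]
  simpa using hw_even.even_add_odd hw_odd

theorem tsum_pmul_vonMangoldt_oddInvSq_prime_pow {p : ℕ} (hp : p.Prime) :
    ∑' k : ℕ, pmul Λ oddInvSq (p ^ (k + 1))
      = if Odd p then Real.log p / ((p : ℝ) ^ 2 - 1) else 0 := by
  have hpow (k : ℕ) : Odd (p ^ (k + 1)) ↔ Odd p := Nat.odd_pow_iff k.succ_ne_zero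
  by_cases hodd : Odd p
  · have hp2 : (2 : ℝ) ≤ p := by exact_mod_cast hp.two_le
    have hr : ((p : ℝ) ^ 2)⁻¹ < 1 := inv_lt_one_of_one_lt₀ (by nlinarith)
    have hterm (k : ℕ) : pmul Λ oddInvSq (p ^ (k + 1))
        = Real.log p * ((p : ℝ) ^ 2)⁻¹ * (((p : ℝ) ^ 2)⁻¹) ^ k := by
      rw [pmul_apply, oddInvSq_apply, if_pos ((hpow k).mpr hodd),
        vonMangoldt_apply_pow k.succ_ne_zero, vonMangoldt_apply_prime hp]
      push_cast
      ring
    rw [tsum_congr hterm, tsum_mul_left, tsum_geometric_of_lt_one (by positivity) hr, if_pos hodd]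
    have : (p : ℝ) ^ 2 - 1 ≠ 0 := by nlinarith
    field_simp
  · simp [pmul_apply, oddInvSq_apply, hpow, hodd]

theorem tsum_pmul_vonMangoldt_oddInvSq :
    ∑' n, pmul Λ oddInvSq n
      = ∑' p : ℕ, if p.Prime ∧ Odd p then Real.log p / ((p : ℝ) ^ 2 - 1) else 0 := by
  have hsupp : Function.support (pmul Λ oddInvSq) ⊆ {n | IsPrimePow n} := fun n hn ↦
    vonMangoldt_ne_zero_iff.mp (left_ne_zero_of_mul (by rwa [← pmul_apply]))
  have hsuppPrimes : Function.support (fun p : ℕ ↦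
      if p.Prime ∧ Odd p then Real.log p / ((p : ℝ) ^ 2 - 1) else 0) ⊆
      Set.range ((↑) : Nat.Primes → ℕ) := fun p hp ↦
    ⟨⟨p, of_not_not fun h ↦ hp (if_neg fun h' ↦ h h'.1)⟩, rfl⟩
  rw [tsum_eq_tsum_primes_tsum_pow_succ
      (summable_norm_pmul_oddInvSq summable_norm_vonMangoldt_div_sq).of_norm hsupp,
    ← Subtype.val_injective.tsum_eq hsuppPrimes]
  exact tsum_congr fun p ↦ by
    rw [tsum_pmul_vonMangoldt_oddInvSq_prime_pow p.prop]
    simp [p.prop]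

theorem tsum_pmul_moebius_oddInvSq :
    ∑' n, pmul (μ : ArithmeticFunction ℝ) oddInvSq n = 8 / Real.pi ^ 2 := by
  have hinv : oddInvSq * pmul (μ : ArithmeticFunction ℝ) oddInvSq = 1 := by
    nth_rewrite 1 [← zeta_pmul oddInvSq]
    rw [← pmul_mul_distrib oddInvSq_mul, coe_zeta_mul_coe_moebius, pmul_oddInvSq_one]
  have hw : Summable (‖oddInvSq ·‖) := by
    simpa only [Real.norm_eq_abs] using hasSum_oddInvSq.summable.abs
  have h := hasSum_mul hw (summable_norm_pmul_oddInvSq summable_norm_moebius_div_sq)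
  rw [hinv, hasSum_oddInvSq.tsum_eq] at h
  have hone : HasSum (1 : ArithmeticFunction ℝ) 1 :=
    (hasSum_ite_eq 1 (1 : ℝ)).congr_fun fun _ ↦ one_apply
  have hprod := hone.unique h
  field_simp
  linarith

/-- ∑_{d odd} μ(d) log d / d² = −(8/π²) ∑_{p odd prime} (log p)/(p² − 1). -/
theorem stmt5 :
    ∑' d : ℕ, (if Odd d then (ArithmeticFunction.moebius d : ℝ) * Real.log d / (d : ℝ) ^ 2 else 0)
      = -(8 / Real.pi ^ 2) *
          ∑' p : ℕ, (if p.Prime ∧ Odd p then Real.log p / ((p : ℝ) ^ 2 - 1) else 0) := by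
  have hterm (d : ℕ) :
      (if Odd d then (μ d : ℝ) * Real.log d / (d : ℝ) ^ 2 else 0)
        = -(pmul (μ : ArithmeticFunction ℝ) oddInvSq * pmul Λ oddInvSq) d := by
    rw [← pmul_mul_distrib oddInvSq_mul, pmul_apply, ← neg_mul, ← ArithmeticFunction.neg_apply,
      ← pmul_moebius_log, pmul_apply, intCoe_apply, log_apply, oddInvSq_apply]
    split_ifs <;> ring
  have hsum := hasSum_mul (summable_norm_pmul_oddInvSq summable_norm_moebius_div_sq)
    (summable_norm_pmul_oddInvSq summable_norm_vonMangoldt_div_sq)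
  rw [tsum_congr hterm, tsum_neg, hsum.tsum_eq, tsum_pmul_moebius_oddInvSq,
    tsum_pmul_vonMangoldt_oddInvSq, neg_mul]
end

section
/- Let λ, λ', λ'', λ''' be points in ℤ² all of the same norm √n, with λ ≠ λ' and λ'' ≠ λ'''. Then λ − λ' + λ'' − λ''' = 0 if and only if (λ = −λ'' and λ' = −λ''') or (λ = λ''' and λ' = λ''). -/
/-!
Identify `ℤ²` with the Gaussian integers, so that the norm of `z` is `z * conj z`. If
`a + c = b + d = s` with all four points of norm `n`, then `conj a = n / a` etc. give
`a c conj s = n s = b d conj s`. Either `s = 0`, or `a c = b d`, and then `{a, c}` and `{b, d}`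
are the root sets of the same quadratic `X² - s X + a c`; as `a ≠ b`, this forces `b = c`, `d = a`.
-/

theorem eq_and_eq_or_eq_and_eq_of_add_eq_add_of_mul_eq_mul {R : Type*} [CommRing R] [IsDomain R]
    {a b c d : R} (hs : a + c = b + d) (hp : a * c = b * d) :
    (b = a ∧ d = c) ∨ (b = c ∧ d = a) := by
  have h : (b - a) * (b - c) = 0 := by linear_combination (-b) * hs + hp
  rcases mul_eq_zero.mp h with h | h
  · exact .inl ⟨by linear_combination h, by linear_combination -hs - h⟩
  · exact .inr ⟨by linear_combination h, by linear_combination -hs - h⟩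

section StarRing

variable {R : Type*} [CommRing R] [StarRing R] {n a b c d : R}

theorem mul_mul_star_add_eq (ha : a * star a = n) (hc : c * star c = n) :
    a * c * star (a + c) = n * (a + c) := by
  rw [star_add]
  linear_combination c * ha + a * hc

theorem sub_add_sub_eq_zero_iff_of_mul_star_eq [IsDomain R] (ha : a * star a = n)
    (hb : b * star b = n) (hc : c * star c = n) (hd : d * star d = n) (hab : a ≠ b) :
    a - b + c - d = 0 ↔ (a = -c ∧ b = -d) ∨ (a = d ∧ b = c) := by
  constructor
  · intro h
    have hs : a + c = b + d := by linear_combination h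
    by_cases hs0 : a + c = 0
    · exact .inl ⟨by linear_combination hs0, by linear_combination hs0 - hs⟩
    have hp : a * c = b * d := by
      refine mul_right_cancel₀ (star_ne_zero.mpr hs0) ?_
      rw [mul_mul_star_add_eq ha hc, hs, mul_mul_star_add_eq hb hd]
    rcases eq_and_eq_or_eq_and_eq_of_add_eq_add_of_mul_eq_mul hs hp with ⟨hba, -⟩ | ⟨hbc, hda⟩
    · exact absurd hba.symm hab
    · exact .inr ⟨hda.symm, hbc⟩
  · rintro (⟨rfl, rfl⟩ | ⟨rfl, rfl⟩) <;> ring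

end StarRing

namespace GaussianInt

@[simps]
def equivProd : GaussianInt ≃+ ℤ × ℤ where
  toFun z := (z.re, z.im)
  invFun p := ⟨p.1, p.2⟩
  left_inv _ := rfl
  right_inv _ := rfl
  map_add' _ _ := rfl

theorem equivProd_symm_mul_star (p : ℤ × ℤ) :
    equivProd.symm p * star (equivProd.symm p) = ((p.1 ^ 2 + p.2 ^ 2 : ℤ) : GaussianInt) := by
  rw [← Zsqrtd.norm_eq_mul_conj, Zsqrtd.norm_def]
  simp only [equivProd_symm_apply_re, equivProd_symm_apply_im]
  congr 1
  ring

end GaussianInt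

theorem stmt10_general (n : ℤ) (a b c d : ℤ × ℤ)
    (ha : a.1 ^ 2 + a.2 ^ 2 = n) (hb : b.1 ^ 2 + b.2 ^ 2 = n)
    (hc : c.1 ^ 2 + c.2 ^ 2 = n) (hd : d.1 ^ 2 + d.2 ^ 2 = n)
    (hab : a ≠ b) :
    a - b + c - d = 0 ↔ (a = -c ∧ b = -d) ∨ (a = d ∧ b = c) := by
  have norm_eq (p : ℤ × ℤ) (hp : p.1 ^ 2 + p.2 ^ 2 = n) :
      GaussianInt.equivProd.symm p * star (GaussianInt.equivProd.symm p) = n := by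
    rw [GaussianInt.equivProd_symm_mul_star, hp]
  have key := sub_add_sub_eq_zero_iff_of_mul_star_eq (norm_eq a ha) (norm_eq b hb) (norm_eq c hc)
    (norm_eq d hd) (GaussianInt.equivProd.symm.injective.ne hab)
  simpa only [← map_sub, ← map_add, ← map_neg, AddEquivClass.map_eq_zero_iff,
    EmbeddingLike.apply_eq_iff_eq] using key

/-- For equal-norm lattice points with λ ≠ λ', λ'' ≠ λ''':
λ − λ' + λ'' − λ''' = 0 iff (λ = −λ'' and λ' = −λ''') or (λ = λ''' and λ' = λ''). -/
theorem stmt10 (n : ℤ) (a b c d : ℤ × ℤ)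
    (ha : a.1 ^ 2 + a.2 ^ 2 = n) (hb : b.1 ^ 2 + b.2 ^ 2 = n)
    (hc : c.1 ^ 2 + c.2 ^ 2 = n) (hd : d.1 ^ 2 + d.2 ^ 2 = n)
    (hab : a ≠ b) (hcd : c ≠ d) :
    a - b + c - d = 0 ↔ (a = -c ∧ b = -d) ∨ (a = d ∧ b = c) :=
  stmt10_general n a b c d ha hb hc hd hab
end

section
/- Let n = ∏_{i=1}^k p_i^{n_i} with all p_i ≡ 1 (mod 4) distinct primes, and let m = ∏_{i=1}^ℓ p_i^{n_i} for some ℓ ≤ k. Then for every θ ∈ ℝ, the number of lattice points λ ∈ ℤ² with ‖λ‖² = n and ‖λ − √n·e^{2πiθ}‖ < √(n/(2m)) is at most 4·∏_{i=ℓ+1}^k (n_i + 1). -/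
/-!
Each prime `pᵢ ≡ 1 (mod 4)` splits as `πᵢ π̄ᵢ` with `πᵢ ∤ π̄ᵢ`, so every `λ` of norm `n`
satisfies `v_{πᵢ}(λ) + v_{π̄ᵢ}(λ) = nᵢ`. If `λ ≠ λ'` of norm `n` have the same `v_{πᵢ}` for
every `i > ℓ`, both are divisible by `∏_{i>ℓ} πᵢ^{aᵢ} π̄ᵢ^{nᵢ-aᵢ}`, so `n/m` divides `|λ - λ'|²`,
which is also even and nonzero: `|λ - λ'|² ≥ 2n/m`. Two points of a disc of radius `√(n/2m)`
are closer than that, so the signature `(v_{πᵢ}(λ))_{i>ℓ}`, which takes at most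
`∏_{i>ℓ} (nᵢ + 1)` values, is injective on them.
-/

open Zsqrtd

local notation "ℤ[i]" => GaussianInt

instance Zsqrtd.isLocalHom_normMonoidHom {d : ℤ} : IsLocalHom (normMonoidHom (d := d)) :=
  ⟨fun z => (isUnit_iff_norm_isUnit z).2⟩

theorem Int.isCoprime_natCast_of_prime_ne {p q : ℕ} (hp : p.Prime) (hq : q.Prime) (hpq : p ≠ q) :
    IsCoprime (p : ℤ) q :=
  Nat.isCoprime_iff_coprime.mpr ((Nat.coprime_primes hp hq).mpr hpq)

theorem Zsqrtd.norm_pow {d : ℤ} (z : ℤ√d) (k : ℕ) : (z ^ k).norm = z.norm ^ k :=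
  map_pow normMonoidHom z k

theorem Nat.factorization_prod_pow_apply {ι : Type*} [Fintype ι] {p : ι → ℕ}
    (hp : ∀ i, (p i).Prime) (hinj : Function.Injective p) (e : ι → ℕ) (i : ι) :
    (∏ j, p j ^ e j).factorization (p i) = e i := by
  rw [Nat.factorization_prod fun j _ => pow_ne_zero _ (hp j).ne_zero, Finset.sum_apply',
    Finset.sum_eq_single i (fun j _ hji => by simp [(hp j).factorization_pow, hinj.ne hji])
      (by simp)]
  simp [(hp i).factorization_pow]

namespace GaussianInt

theorem norm_eq_sq_add_sq (z : ℤ[i]) : z.norm = z.re ^ 2 + z.im ^ 2 := by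
  rw [norm_def]; ring

theorem prime_of_norm_eq_prime {π : ℤ[i]} {p : ℕ} (hp : p.Prime) (hπ : π.norm = p) :
    Prime π :=
  (Irreducible.of_map (f := normMonoidHom) (by
    rw [show normMonoidHom π = π.norm from rfl, hπ]
    exact (Nat.prime_iff_prime_int.mp hp).irreducible)).prime

theorem exists_norm_eq_of_mod_four_eq_one {p : ℕ} (hp : p.Prime) (hp4 : p % 4 = 1) :
    ∃ π : ℤ[i], π.norm = p := by
  have := Fact.mk hp
  obtain ⟨a, b, hab⟩ := Nat.Prime.sq_add_sq (p := p) (by omega)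
  exact ⟨⟨a, b⟩, by rw [norm_eq_sq_add_sq, ← hab]; push_cast; ring⟩

theorem natCast_dvd_of_dvd_intCast {π : ℤ[i]} {p : ℕ} (hp : p.Prime) (hπ : π.norm = p)
    {c : ℤ} (h : π ∣ (c : ℤ[i])) : (p : ℤ) ∣ c := by
  obtain ⟨q, hq⟩ := h
  have hc : (p : ℤ) ∣ c * c := ⟨q.norm, by rw [← hπ, ← norm_mul, ← hq, norm_intCast]⟩
  exact ((Nat.prime_iff_prime_int.mp hp).dvd_mul.mp hc).elim id id

theorem not_dvd_star_of_norm_eq_prime {π : ℤ[i]} {p : ℕ} (hp : p.Prime) (hp2 : p ≠ 2)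
    (hπ : π.norm = p) : ¬π ∣ star π := by
  -- `π ∣ π̄` makes `π` divide `π + π̄ = 2 re π` and `i (π̄ - π) = 2 im π`, so `p² ∣ N π = p`.
  intro h
  have hre : (p : ℤ) ∣ 2 * π.re := natCast_dvd_of_dvd_intCast hp hπ <| by
    have : ((2 * π.re : ℤ) : ℤ[i]) = π + star π := by ext <;> simp; ring
    exact this ▸ dvd_add dvd_rfl h
  have him : (p : ℤ) ∣ 2 * π.im := natCast_dvd_of_dvd_intCast hp hπ <| by
    have : ((2 * π.im : ℤ) : ℤ[i]) = (π - star π) * ⟨0, -1⟩ := by ext <;> simp; ring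
    exact this ▸ (dvd_sub dvd_rfl h).mul_right _
  have hcop : IsCoprime (p : ℤ) 2 := by
    exact_mod_cast Int.isCoprime_natCast_of_prime_ne hp Nat.prime_two hp2
  have hpp : (p : ℤ) * p ∣ p * 1 := by
    rw [mul_one]
    nth_rw 3 [← hπ]
    rw [norm_eq_sq_add_sq, sq, sq]
    exact dvd_add (mul_dvd_mul (hcop.dvd_of_dvd_mul_left hre) (hcop.dvd_of_dvd_mul_left hre))
      (mul_dvd_mul (hcop.dvd_of_dvd_mul_left him) (hcop.dvd_of_dvd_mul_left him))
  exact hp.not_dvd_one (Int.natCast_dvd_natCast.mp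
    (by exact_mod_cast (mul_dvd_mul_iff_left (by exact_mod_cast hp.ne_zero)).mp hpp))

theorem emultiplicity_intCast {π : ℤ[i]} (hπ : Prime π) (hs : ¬π ∣ star π) (c : ℤ) :
    emultiplicity π (c : ℤ[i]) = emultiplicity π.norm c := by
  rw [emultiplicity_eq_emultiplicity_iff]
  intro k
  rw [← intCast_dvd_intCast, Int.cast_pow, norm_eq_mul_conj, mul_pow]
  refine ⟨fun h => ?_, (dvd_mul_right _ _).trans⟩
  have h' : star π ^ k ∣ (c : ℤ[i]) := by simpa using map_dvd (starRingAut (R := ℤ[i])) h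
  exact ((hπ.coprime_iff_not_dvd).mpr hs).pow.mul_dvd h h'

theorem multiplicity_add_multiplicity_star {π z : ℤ[i]} {p n : ℕ} (hp : p.Prime)
    (hs : ¬π ∣ star π) (hπ : π.norm = p) (hz : z.norm = n) (hn : n ≠ 0) :
    multiplicity π z + multiplicity (star π) z = n.factorization p := by
  have hπp := prime_of_norm_eq_prime hp hπ
  have hz0 : z * star z ≠ 0 := by
    rw [← norm_eq_mul_conj, hz]; exact_mod_cast hn
  rw [← multiplicity_map_eq (starRingAut (R := ℤ[i])) (a := star π), starRingAut_apply,
    starRingAut_apply, star_star, ← multiplicity_mul hπp (.of_not_isUnit hπp.not_isUnit hz0),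
    ← norm_eq_mul_conj, multiplicity_eq_of_emultiplicity_eq (emultiplicity_intCast hπp hs _),
    hπ, hz, Int.natCast_multiplicity, Nat.multiplicity_eq_factorization hp hn]

theorem pow_factorization_dvd_norm_sub {π z w : ℤ[i]} {p n : ℕ} (hp : p.Prime)
    (hs : ¬π ∣ star π) (hπ : π.norm = p) (hz : z.norm = n) (hw : w.norm = n) (hn : n ≠ 0)
    (h : multiplicity π z = multiplicity π w) :
    (p : ℤ) ^ n.factorization p ∣ (z - w).norm := by
  have hzsum := multiplicity_add_multiplicity_star hp hs hπ hz hn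
  have hwsum := multiplicity_add_multiplicity_star hp hs hπ hw hn
  have hcop := ((prime_of_norm_eq_prime hp hπ).coprime_iff_not_dvd).mpr hs
  have hdvd : ∀ x : ℤ[i], multiplicity π x = multiplicity π z →
      multiplicity (star π) x = multiplicity (star π) z →
      π ^ multiplicity π z * star π ^ multiplicity (star π) z ∣ x := fun x ha hb =>
    hcop.pow.mul_dvd (ha ▸ pow_multiplicity_dvd _ _) (hb ▸ pow_multiplicity_dvd _ _)
  obtain ⟨q, hq⟩ := dvd_sub (hdvd z rfl rfl) (hdvd w h.symm (by omega))
  refine ⟨q.norm, ?_⟩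
  rw [hq, norm_mul, norm_mul, norm_pow, norm_pow, norm_conj, hπ, ← pow_add, hzsum]

theorem two_dvd_norm_sub {z w : ℤ[i]} (h : z.norm = w.norm) : 2 ∣ (z - w).norm :=
  ⟨z.norm - (z.re * w.re + z.im * w.im), by
    simp only [norm_eq_sq_add_sq, re_sub, im_sub] at h ⊢; linear_combination -h⟩

theorem norm_sub_lt_of_mem_ball {z w : ℤ[i]} {c : ℂ} {r : ℝ} (hz : ‖(z : ℂ) - c‖ < r)
    (hw : ‖(w : ℂ) - c‖ < r) : ((z - w).norm : ℝ) < (2 * r) ^ 2 := by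
  rw [intCast_real_norm, Complex.normSq_eq_norm_sq, toComplex_sub]
  refine pow_lt_pow_left₀ ((norm_sub_le_norm_sub_add_norm_sub _ c _).trans_lt ?_)
    (_root_.norm_nonneg _) two_ne_zero
  rw [norm_sub_rev c]; linarith

section Signature

variable {ι : Type*} [Fintype ι] (P : ι → Prop) [DecidablePred P] {p : ι → ℕ}
  (hp : ∀ i, (p i).Prime) (hinj : Function.Injective p) (e : ι → ℕ)
include hp hinj

theorem two_mul_prod_le_norm_sub (hp2 : ∀ i, p i ≠ 2) {π : ι → ℤ[i]}
    (hπ : ∀ i, (π i).norm = p i) {z w : ℤ[i]} (hz : z.norm = (∏ i, p i ^ e i : ℕ))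
    (hw : w.norm = (∏ i, p i ^ e i : ℕ)) (hzw : z ≠ w)
    (h : ∀ i, P i → multiplicity (π i) z = multiplicity (π i) w) :
    2 * ∏ i, (if P i then (p i : ℤ) ^ e i else 1) ≤ (z - w).norm := by
  have hn : ∏ i, p i ^ e i ≠ 0 :=
    Finset.prod_ne_zero_iff.mpr fun i _ => pow_ne_zero _ (hp i).ne_zero
  have hM : ∏ i, (if P i then (p i : ℤ) ^ e i else 1) ∣ (z - w).norm := by
    refine Finset.prod_dvd_of_coprime (fun i _ j _ hij => ?_) fun i _ => ?_
    · simp only [Function.onFun]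
      split_ifs
      exacts [(Int.isCoprime_natCast_of_prime_ne (hp i) (hp j) (hinj.ne hij)).pow,
        isCoprime_one_right, isCoprime_one_left, isCoprime_one_left]
    · split_ifs with hi
      · simpa only [Nat.factorization_prod_pow_apply hp hinj] using
          pow_factorization_dvd_norm_sub (hp i)
            (not_dvd_star_of_norm_eq_prime (hp i) (hp2 i) (hπ i)) (hπ i) hz hw hn (h i hi)
      · exact one_dvd _
  have hodd : IsCoprime (2 : ℤ) (∏ i, (if P i then (p i : ℤ) ^ e i else 1)) := by
    refine IsCoprime.prod_right fun i _ => ?_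
    split_ifs
    · exact_mod_cast
        (Int.isCoprime_natCast_of_prime_ne Nat.prime_two (hp i) (hp2 i).symm).pow_right
    · exact isCoprime_one_right
  exact Int.le_of_dvd (norm_pos.mpr (sub_ne_zero.mpr hzw))
    (hodd.mul_dvd (two_dvd_norm_sub (hz.trans hw.symm)) hM)

theorem ncard_le_prod_of_norm_sub_lt (hp4 : ∀ i, p i % 4 = 1) {A : Set ℤ[i]}
    (hA : ∀ z ∈ A, z.norm = (∏ i, p i ^ e i : ℕ))
    (hsep : ∀ z ∈ A, ∀ w ∈ A, (z - w).norm < 2 * ∏ i, if P i then (p i : ℤ) ^ e i else 1) :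
    A.ncard ≤ ∏ i, if P i then e i + 1 else 1 := by
  classical
  choose π hπ using fun i => exists_norm_eq_of_mod_four_eq_one (hp i) (hp4 i)
  have hp2 : ∀ i, p i ≠ 2 := fun i h => by simpa [h] using hp4 i
  have hn : ∏ i, p i ^ e i ≠ 0 :=
    Finset.prod_ne_zero_iff.mpr fun i _ => pow_ne_zero _ (hp i).ne_zero
  let signature (z : ℤ[i]) (i : ι) : ℕ := if P i then multiplicity (π i) z else 0
  let S := Fintype.piFinset fun i => if P i then Finset.range (e i + 1) else {0}
  have hmaps : ∀ z ∈ A, signature z ∈ (S : Set (ι → ℕ)) := by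
    intro z hz
    simp only [S, signature, Finset.mem_coe, Fintype.mem_piFinset]
    intro i
    split_ifs
    · have := multiplicity_add_multiplicity_star (hp i)
        (not_dvd_star_of_norm_eq_prime (hp i) (hp2 i) (hπ i)) (hπ i) (hA z hz) hn
      rw [Nat.factorization_prod_pow_apply hp hinj] at this
      exact Finset.mem_range.mpr (by omega)
    · exact Finset.mem_singleton_self 0
  have hinjOn : Set.InjOn signature A := by
    intro z hz w hw hsig
    by_contra hzw
    refine (hsep z hz w hw).not_ge <|
      two_mul_prod_le_norm_sub P hp hinj e hp2 hπ (hA z hz) (hA w hw) hzw fun i hi => ?_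
    simpa [signature, hi] using congrFun hsig i
  calc A.ncard ≤ (S : Set (ι → ℕ)).ncard := Set.ncard_le_ncard_of_injOn signature hmaps hinjOn
    _ = ∏ i, if P i then e i + 1 else 1 := by
      rw [Set.ncard_coe_finset, Fintype.card_piFinset]
      exact Finset.prod_congr rfl fun i _ => by split_ifs <;> simp

end Signature

end GaussianInt

theorem stmt11_general (k ℓ : ℕ) (p : Fin k → ℕ)
    (hp : ∀ i, (p i).Prime) (hp4 : ∀ i, p i % 4 = 1) (hinj : Function.Injective p)
    (e : Fin k → ℕ)
    (n m : ℕ) (hn : n = ∏ i : Fin k, p i ^ e i)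
    (hm : m = ∏ i : Fin k, if (i : ℕ) < ℓ then p i ^ e i else 1)
    (θ : ℝ) :
    Set.ncard {l : ℤ × ℤ | l.1 ^ 2 + l.2 ^ 2 = (n : ℤ) ∧
        ‖((l.1 : ℝ) : ℂ) + ((l.2 : ℝ) : ℂ) * Complex.I
            - (Real.sqrt n : ℂ) * Complex.exp (2 * Real.pi * θ * Complex.I)‖
          < Real.sqrt ((n : ℝ) / (2 * (m : ℝ)))}
      ≤ 4 * ∏ i : Fin k, if ℓ ≤ (i : ℕ) then e i + 1 else 1 := by
  set M : ℤ := ∏ i : Fin k, if ℓ ≤ (i : ℕ) then (p i : ℤ) ^ e i else 1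
  have hm0 : (0 : ℝ) < m := by
    rw [hm]; exact_mod_cast Finset.prod_pos fun i _ => by split_ifs <;> simp [(hp i).pos]
  have hnmM : (n : ℝ) = m * M := by
    simp only [hn, hm, M, Nat.cast_prod, Int.cast_prod, ← Finset.prod_mul_distrib]
    refine Finset.prod_congr rfl fun i _ => ?_
    split_ifs <;> first | omega | simp
  set r := Real.sqrt ((n : ℝ) / (2 * (m : ℝ)))
  have hr : (2 * r) ^ 2 = 2 * M := by
    rw [mul_pow, Real.sq_sqrt (by positivity), hnmM]; field_simp
  let toGaussianInt : ℤ × ℤ → GaussianInt := fun l => ⟨l.1, l.2⟩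
  rw [← Set.ncard_image_of_injective _ (f := toGaussianInt)
    fun l l' h => Prod.ext (congrArg Zsqrtd.re h) (congrArg Zsqrtd.im h)]
  refine (GaussianInt.ncard_le_prod_of_norm_sub_lt (fun i : Fin k => ℓ ≤ (i : ℕ)) hp hinj e hp4
    ?_ ?_).trans (Nat.le_mul_of_pos_left _ four_pos)
  · rintro _ ⟨l, ⟨hl, -⟩, rfl⟩
    rw [← hn, GaussianInt.norm_eq_sq_add_sq]; exact hl
  · rintro _ ⟨l, ⟨-, hl⟩, rfl⟩ _ ⟨l', ⟨-, hl'⟩, rfl⟩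
    have := GaussianInt.norm_sub_lt_of_mem_ball (z := toGaussianInt l) (w := toGaussianInt l')
      (by simpa [toGaussianInt, GaussianInt.toComplex_def'] using hl)
      (by simpa [toGaussianInt, GaussianInt.toComplex_def'] using hl')
    exact Int.cast_lt (R := ℝ) |>.mp (by rw [Int.cast_mul, Int.cast_ofNat]; exact hr ▸ this)

/-- Let n = ∏ p_i^{n_i} with distinct primes p_i ≡ 1 (mod 4), and m = ∏_{i<ℓ} p_i^{n_i}.
For every θ, the number of lattice points λ with ‖λ‖² = n and
‖λ − √n e^{2πiθ}‖ < √(n/(2m)) is at most 4 ∏_{i≥ℓ} (n_i + 1). -/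
theorem stmt11 (k ℓ : ℕ) (hl : ℓ ≤ k) (p : Fin k → ℕ)
    (hp : ∀ i, (p i).Prime) (hp4 : ∀ i, p i % 4 = 1) (hinj : Function.Injective p)
    (e : Fin k → ℕ) (he : ∀ i, 1 ≤ e i)
    (n m : ℕ) (hn : n = ∏ i : Fin k, p i ^ e i)
    (hm : m = ∏ i : Fin k, if (i : ℕ) < ℓ then p i ^ e i else 1)
    (θ : ℝ) :
    Set.ncard {l : ℤ × ℤ | l.1 ^ 2 + l.2 ^ 2 = (n : ℤ) ∧
        ‖((l.1 : ℝ) : ℂ) + ((l.2 : ℝ) : ℂ) * Complex.I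
            - (Real.sqrt n : ℂ) * Complex.exp (2 * Real.pi * θ * Complex.I)‖
          < Real.sqrt ((n : ℝ) / (2 * (m : ℝ)))}
      ≤ 4 * ∏ i : Fin k, if ℓ ≤ (i : ℕ) then e i + 1 else 1 :=
  stmt11_general k ℓ p hp hp4 hinj e n m hn hm θ
end

section
/- Let a, b be coprime positive integers with 0 < b < a < N, and ε > 1/(2N²). Then the number of pairs (x,y) of coprime integers with 0 < y < x < N and |y/x − b/a| < 2ε is O(εN²). -/
/-!
For a pair `(x, y)` counted here, `d = a y - b x` satisfies `|d| < 2εaN`. The value `d = 0`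
forces `(x, y) = (a, b)` by coprimality. Otherwise the map `(x, y) ↦ (d, x / a)` is injective,
because equal `d` forces `x₁ ≡ x₂ (mod a)`; it takes at most `4εaN` values in the first
coordinate and at most `2N / a` in the second, so there are at most `1 + 8εN² ≤ 10εN²` pairs.
-/

open Set

lemma abs_mul_sub_mul_lt_of_abs_div_sub_div_lt {a b x y δ M : ℝ} (ha : 0 < a) (hx : 0 < x)
    (hxM : x ≤ M) (h : |y / x - b / a| < δ) : |a * y - b * x| < δ * a * M := by
  have hδ : 0 < δ := (abs_nonneg _).trans_lt h
  calc |a * y - b * x| = |y / x - b / a| * (a * x) := by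
        rw [← abs_of_pos (mul_pos ha hx), ← abs_mul]
        congr 1
        field_simp
    _ < δ * (a * x) := by gcongr
    _ ≤ δ * a * M := by rw [← mul_assoc]; gcongr

namespace Int

lemma eq_of_mul_eq_mul_of_isCoprime {a b x y : ℤ} (hab : IsCoprime a b) (hxy : IsCoprime x y)
    (ha : 0 < a) (hx : 0 < x) (h : a * y = b * x) : x = a ∧ y = b := by
  have hax : a ∣ x := hab.dvd_of_dvd_mul_left ⟨y, by rw [← h]⟩
  have hxa : x ∣ a := hxy.dvd_of_dvd_mul_left ⟨b, by rw [mul_comm, h, mul_comm]⟩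
  have hxa_eq : x = a := Int.dvd_antisymm hx.le ha.le hxa hax
  subst hxa_eq
  exact ⟨rfl, mul_left_cancel₀ ha.ne' (h.trans (mul_comm b x))⟩

lemma injective_mul_sub_mul_ediv {a b : ℤ} (hab : IsCoprime a b) (ha : a ≠ 0) :
    Function.Injective fun z : ℤ × ℤ => (a * z.2 - b * z.1, z.1 / a) := by
  rintro ⟨x₁, y₁⟩ ⟨x₂, y₂⟩ h
  simp only [Prod.mk.injEq] at h
  obtain ⟨hd, hq⟩ := h
  have hmod : x₁ % a = x₂ % a := by
    refine Int.ModEq.eq (Int.modEq_iff_dvd.2 (hab.dvd_of_dvd_mul_left ⟨y₂ - y₁, ?_⟩))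
    linear_combination hd
  have hx : x₁ = x₂ := by
    rw [← Int.mul_ediv_add_emod x₁ a, ← Int.mul_ediv_add_emod x₂ a, hq, hmod]
  subst hx
  exact Prod.ext rfl (mul_left_cancel₀ ha (by linarith))

end Int

lemma ncard_le_of_abs_mul_sub_mul_le {a b M D : ℤ} (hab : IsCoprime a b) (ha : 0 < a)
    (hM : 0 ≤ M) (hD : 0 ≤ D) (s : Set (ℤ × ℤ))
    (hs : ∀ z ∈ s, 0 < z.1 ∧ z.1 ≤ M ∧ IsCoprime z.1 z.2 ∧ |a * z.2 - b * z.1| ≤ D) :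
    (s.ncard : ℤ) ≤ 1 + 2 * D * (M / a + 1) := by
  set T : Finset (ℤ × ℤ) := (Finset.Icc (-D) D).erase 0 ×ˢ Finset.Icc 0 (M / a)
  have hmaps : ∀ z ∈ s \ {(a, b)}, (a * z.2 - b * z.1, z.1 / a) ∈ (T : Set (ℤ × ℤ)) := by
    rintro ⟨x, y⟩ ⟨hz, hne⟩
    obtain ⟨hx, hxM, hxy, hd⟩ := hs _ hz
    have hd0 : a * y - b * x ≠ 0 := fun h0 =>
      hne (Prod.ext_iff.2 (Int.eq_of_mul_eq_mul_of_isCoprime hab hxy ha hx (by linarith)))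
    simp only [T, Finset.coe_product, Finset.coe_erase, Finset.coe_Icc, mem_prod, mem_sdiff,
      mem_Icc, mem_singleton_iff]
    exact ⟨⟨abs_le.1 hd, hd0⟩, Int.ediv_nonneg hx.le ha.le, Int.ediv_le_ediv ha hxM⟩
  have hdiff : (s \ {(a, b)}).ncard ≤ T.card := by
    simpa using ncard_le_ncard_of_injOn _ hmaps (Int.injective_mul_sub_mul_ediv hab ha.ne').injOn
  have hTcard : (T.card : ℤ) = 2 * D * (M / a + 1) := by
    have hIcc : ((Finset.Icc (-D) D).card : ℤ) = 2 * D + 1 := by rw [Int.card_Icc]; omega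
    have hIcc' : ((Finset.Icc 0 (M / a)).card : ℤ) = M / a + 1 := by
      rw [Int.card_Icc]; have := Int.ediv_nonneg hM ha.le; omega
    rw [Finset.card_product, Finset.card_erase_of_mem (by simpa using hD), Nat.cast_mul, hIcc',
      Nat.cast_sub (by omega), hIcc]
    ring
  have hsplit := ncard_le_ncard_sdiff_add_ncard s {(a, b)}
  rw [ncard_singleton] at hsplit
  omega

/-- Counting coprime pairs 0 < y < x < N with y/x in an interval of length 4ε around b/a:
there are O(εN²) such pairs when ε > 1/(2N²). -/
theorem stmt16 : ∃ C : ℝ, 0 < C ∧ ∀ (N : ℕ) (a b : ℤ) (ε : ℝ),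
    IsCoprime a b → 0 < b → b < a → a < (N : ℤ) → 1 / (2 * (N : ℝ) ^ 2) < ε →
    (Set.ncard {z : ℤ × ℤ | 0 < z.2 ∧ z.2 < z.1 ∧ z.1 < (N : ℤ) ∧ IsCoprime z.1 z.2 ∧
          |(z.2 : ℝ) / (z.1 : ℝ) - (b : ℝ) / (a : ℝ)| < 2 * ε} : ℝ)
      ≤ C * ε * (N : ℝ) ^ 2 := by
  refine ⟨10, by norm_num, fun N a b ε hab hb hba haN hε => ?_⟩
  have ha : 0 < a := hb.trans hba
  have haR : (0 : ℝ) < a := by exact_mod_cast ha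
  have hN : (0 : ℝ) < N := haR.trans (by exact_mod_cast haN)
  have hε0 : 0 < ε := lt_trans (by positivity) hε
  have hεN : 1 ≤ 2 * ε * (N : ℝ) ^ 2 := by
    rw [div_lt_iff₀ (by positivity)] at hε
    linarith
  set D := ⌊2 * ε * a * N⌋
  have hD : 0 ≤ D := Int.floor_nonneg.2 (by positivity)
  rw [← Int.cast_natCast]
  refine (Int.cast_le.2 (ncard_le_of_abs_mul_sub_mul_le hab ha (by omega : 0 ≤ (N : ℤ) - 1) hD _
    fun z hz => ?_)).trans ?_
  · obtain ⟨hy, hyx, hxN, hcop, hclose⟩ := hz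
    have hx : (0 : ℝ) < z.1 := by exact_mod_cast hy.trans hyx
    have hxN' : (z.1 : ℝ) ≤ N := by exact_mod_cast hxN.le
    refine ⟨hy.trans hyx, by omega, hcop, Int.le_floor.2 ?_⟩
    push_cast
    exact (abs_mul_sub_mul_lt_of_abs_div_sub_div_lt haR hx hxN' hclose).le
  set Q := ((N : ℤ) - 1) / a
  have hQ : (0 : ℝ) ≤ Q := Int.cast_nonneg (Int.ediv_nonneg (by omega) ha.le)
  have hQa : (Q : ℝ) * a ≤ N - 1 := by exact_mod_cast Int.ediv_mul_le ((N : ℤ) - 1) ha.ne'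
  have haN' : (a : ℝ) ≤ N := by exact_mod_cast haN.le
  push_cast
  calc 1 + 2 * (D : ℝ) * (Q + 1) ≤ 1 + 2 * (2 * ε * a * N) * (Q + 1) := by
        gcongr; exact Int.floor_le _
    _ = 1 + 4 * ε * N * (Q * a + a) := by ring
    _ ≤ 1 + 4 * ε * N * ((N - 1) + N) := by gcongr
    _ ≤ 10 * ε * N ^ 2 := by nlinarith
end

section
/- Let g ≥ 1 and define f(t) = ((t+i)^g − (t−i)^g)/(2i) ∈ ℤ[t]. Then f and its derivative f' have no common root (equivalently gcd(f, f') = 1 in ℚ[t]), so f has no repeated roots. -/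
/-!
Write `x = z + i` and `y = z - i`. A common root `z` of `f` and `f'` gives `x ^ g = y ^ g` and
`x ^ (g - 1) = y ^ (g - 1)`, which together force `x = y`, i.e. `i = -i`. Coprimality of two
polynomials is tested on common roots in an algebraic closure.
-/

open Polynomial

/-- f(t) = ((t+i)^g − (t−i)^g)/(2i), i.e. Im((t+i)^g) as a polynomial. -/
noncomputable def fpoly (g : ℕ) : Polynomial ℂ :=
  Polynomial.C (2 * Complex.I)⁻¹ *
    ((Polynomial.X + Polynomial.C Complex.I) ^ g - (Polynomial.X - Polynomial.C Complex.I) ^ g)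

theorem eq_of_pow_eq_of_pow_pred_eq {M : Type*} [CommMonoidWithZero M] [IsCancelMulZero M]
    {x y : M} {n : ℕ} (hn : n ≠ 0) (h : x ^ n = y ^ n) (h' : x ^ (n - 1) = y ^ (n - 1)) :
    x = y := by
  obtain ⟨m, rfl⟩ := Nat.exists_eq_succ_of_ne_zero hn
  rw [Nat.succ_sub_one] at h'
  rcases eq_or_ne y 0 with rfl | hy
  · simpa using h
  · refine mul_left_cancel₀ (pow_ne_zero m hy) ?_
    calc y ^ m * x = x ^ (m + 1) := by rw [pow_succ, h']
      _ = y ^ m * y := by rw [h, pow_succ]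

theorem derivative_X_sub_C_pow_sub_X_sub_C_pow {R : Type*} [CommRing R] (a b : R) (n : ℕ) :
    derivative ((X - C a) ^ n - (X - C b) ^ n) =
      C (n : R) * ((X - C a) ^ (n - 1) - (X - C b) ^ (n - 1)) := by
  rw [derivative_sub, derivative_X_sub_C_pow, derivative_X_sub_C_pow, mul_sub]

theorem separable_X_sub_C_pow_sub_X_sub_C_pow {K : Type*} [Field K] {a b : K} (hab : a ≠ b)
    {n : ℕ} (hn : (n : K) ≠ 0) : ((X - C a) ^ n - (X - C b) ^ n).Separable := by
  have hn₀ : n ≠ 0 := by rintro rfl; exact hn Nat.cast_zero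
  have hnL : (n : AlgebraicClosure K) ≠ 0 := by
    rwa [← map_natCast (algebraMap K (AlgebraicClosure K)), _root_.map_ne_zero]
  rw [Separable, isCoprime_iff_aeval_ne_zero_of_isAlgClosed K (AlgebraicClosure K),
    derivative_X_sub_C_pow_sub_X_sub_C_pow]
  intro z
  by_contra! hroot
  obtain ⟨hp, hp'⟩ := hroot
  simp only [map_sub, map_pow, map_mul, aeval_X, aeval_C, map_natCast, sub_eq_zero, mul_eq_zero,
    hnL, false_or] at hp hp'
  exact hab (FaithfulSMul.algebraMap_injective K (AlgebraicClosure K)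
    (sub_right_injective (eq_of_pow_eq_of_pow_pred_eq hn₀ hp hp')))

theorem fpoly_eq_C_mul (g : ℕ) :
    fpoly g = C (2 * Complex.I)⁻¹ * ((X - C (-Complex.I)) ^ g - (X - C Complex.I) ^ g) := by
  rw [fpoly, map_neg, sub_neg_eq_add]

theorem separable_fpoly {g : ℕ} (hg : g ≠ 0) : (fpoly g).Separable := by
  rw [fpoly_eq_C_mul]
  refine Separable.unit_mul (isUnit_C.mpr (by simp)) ?_
  refine separable_X_sub_C_pow_sub_X_sub_C_pow ?_ (Nat.cast_ne_zero.mpr hg)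
  simp [CharZero.neg_eq_self_iff]

/-- f and f' are coprime, so f has no repeated roots. -/
theorem stmt17 (g : ℕ) (hg : 1 ≤ g) :
    IsCoprime (fpoly g) (Polynomial.derivative (fpoly g)) ∧ Squarefree (fpoly g) := by
  have hsep := separable_fpoly (Nat.one_le_iff_ne_zero.mp hg)
  exact ⟨hsep, hsep.squarefree⟩
end
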